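/- Let H_0 be a positive semidefinite Hermitian operator on a finite-dimensional complex inner product space whose kernel is one-dimensional, and whose smallest non-zero eigenvalue is strictly larger than 1. Let V be a Hermitian operator and Δ > 0 with ‖V‖ ≤ Δ/2. Then the Hermitian operator H = Δ H_0 + V has exactly one eigenvalue (counted with multiplicity) in the interval [−Δ/2, Δ/2]. -/

import Mathlib

open scoped InnerProductSpace ComplexOrder

/-- Eigenvalues of a Hermitian matrix, listed in non-decreasing order with multiplicity
(junk value `0` for non-Hermitian matrices). -/
noncomputable def eigs {N : ℕ} (A : Matrix (Fin N) (Fin N) ℂ) : Fin N → ℝ :=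
  if hA : A.IsHermitian then hA.eigenvalues ∘ Tuple.sort hA.eigenvalues else 0

/-- The operator norm of a matrix, acting on Euclidean space. -/
noncomputable def opNorm {N : ℕ} (A : Matrix (Fin N) (Fin N) ℂ) : ℝ :=
  ‖Matrix.toEuclideanCLM (𝕜 := ℂ) (n := Fin N) A‖

/-!
Write `Q_A(x) = re ⟪x, A x⟫`. As `H₀ ⪰ 0` and `|Q_V| ≤ Δ/2 ‖·‖²`, the form of `H = Δ H₀ + V`
satisfies `Q_H ≥ -Δ/2 ‖·‖²`, so no eigenvalue of `H` lies below `-Δ/2`. On the kernel vector `ψ`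
of `H₀`, `Q_H(ψ) = Q_V(ψ) ≤ Δ/2 ‖ψ‖²`; on `ψᗮ` the spectral gap gives `Q_{H₀} > ‖·‖²`, hence
`Q_H > Δ/2 ‖·‖²`. A counting form of min–max turns this into exactly one eigenvalue `≤ Δ/2`: the
eigenvectors with eigenvalue `≤ c` span a space on which `Q_H ≤ c ‖·‖²`, which therefore meets
`ψᗮ` only in `0` and has dimension at most one; it is nonzero since `Q_H(ψ) / ‖ψ‖²` is an average
of eigenvalues.
-/

namespace OrthonormalBasis

variable {𝕜 E ι : Type*} [RCLike 𝕜] [NormedAddCommGroup E] [InnerProductSpace 𝕜 E] [Fintype ι]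

def IsEigenbasis (b : OrthonormalBasis ι 𝕜 E) (T : E →ₗ[𝕜] E) (μ : ι → ℝ) : Prop :=
  ∀ i, T (b i) = (μ i : 𝕜) • b i

theorem inner_eq_zero_of_mem_span {b : OrthonormalBasis ι 𝕜 E} {p : ι → Prop} {x : E}
    (hx : x ∈ Submodule.span 𝕜 (Set.range fun i : {i // p i} => b i)) {j : ι} (hj : ¬ p j) :
    ⟪b j, x⟫_𝕜 = 0 := by
  induction hx using Submodule.span_induction with
  | mem y hy =>
    obtain ⟨⟨i, hi⟩, rfl⟩ := hy
    exact b.orthonormal.2 (by rintro rfl; exact hj hi)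
  | zero => exact inner_zero_right _
  | add y z _ _ hy hz => rw [inner_add_right, hy, hz, add_zero]
  | smul a y _ hy => rw [inner_smul_right, hy, mul_zero]

namespace IsEigenbasis

open RCLike Finset

variable {T : E →ₗ[𝕜] E} {b : OrthonormalBasis ι 𝕜 E} {μ : ι → ℝ}

theorem re_inner_apply_self_sub_eq_sum (hb : b.IsEigenbasis T μ) (c : ℝ) (x : E) :
    re ⟪x, T x⟫_𝕜 - c * ‖x‖ ^ 2 = ∑ i, (μ i - c) * ‖⟪b i, x⟫_𝕜‖ ^ 2 := by
  have hTx : T x = ∑ i, (⟪b i, x⟫_𝕜 * μ i) • b i := by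
    conv_lhs => rw [← b.sum_repr' x]
    simp [map_sum, hb _, smul_smul]
  have hQ : re ⟪x, T x⟫_𝕜 = ∑ i, μ i * ‖⟪b i, x⟫_𝕜‖ ^ 2 := by
    rw [hTx, inner_sum, map_sum]
    refine sum_congr rfl fun i _ => ?_
    rw [inner_smul_right, ← inner_conj_symm x (b i), mul_comm, ← mul_assoc, RCLike.conj_mul]
    norm_cast
    exact mul_comm _ _
  rw [hQ, ← b.sum_sq_norm_inner_right x, mul_sum, ← sum_sub_distrib]
  simp_rw [sub_mul]

theorem re_inner_apply_self_le (hb : b.IsEigenbasis T μ) {c : ℝ} {x : E}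
    (hx : ∀ i, c < μ i → ⟪b i, x⟫_𝕜 = 0) : re ⟪x, T x⟫_𝕜 ≤ c * ‖x‖ ^ 2 := by
  rw [← sub_nonpos, hb.re_inner_apply_self_sub_eq_sum]
  refine sum_nonpos fun i _ => ?_
  rcases le_or_gt (μ i) c with hi | hi
  · exact mul_nonpos_of_nonpos_of_nonneg (sub_nonpos.2 hi) (sq_nonneg _)
  · simp [hx i hi]

theorem lt_re_inner_apply_self (hb : b.IsEigenbasis T μ) {c : ℝ} {x : E}
    (hx : ∀ i, μ i ≤ c → ⟪b i, x⟫_𝕜 = 0) (hx0 : x ≠ 0) : c * ‖x‖ ^ 2 < re ⟪x, T x⟫_𝕜 := by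
  rw [← sub_pos, hb.re_inner_apply_self_sub_eq_sum]
  obtain ⟨j, hj⟩ : ∃ j, ⟪b j, x⟫_𝕜 ≠ 0 := by
    by_contra! h
    exact hx0 (by simpa [h] using (b.sum_repr' x).symm)
  have hterm : ∀ i, ⟪b i, x⟫_𝕜 ≠ 0 → 0 < (μ i - c) * ‖⟪b i, x⟫_𝕜‖ ^ 2 := fun i hi =>
    mul_pos (sub_pos.2 (not_le.1 (mt (hx i) hi))) (by positivity)
  refine sum_pos' (fun i _ => ?_) ⟨j, mem_univ _, hterm j hj⟩
  by_cases hi : ⟪b i, x⟫_𝕜 = 0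
  · simp [hi]
  · exact (hterm i hi).le

theorem exists_eigenvalue_le (hb : b.IsEigenbasis T μ) {c : ℝ} {x : E} (hx0 : x ≠ 0)
    (hx : re ⟪x, T x⟫_𝕜 ≤ c * ‖x‖ ^ 2) : ∃ i, μ i ≤ c := by
  by_contra! h
  exact (hb.lt_re_inner_apply_self (fun i hi => absurd hi (h i).not_ge) hx0).not_ge hx

theorem le_eigenvalue (hb : b.IsEigenbasis T μ) {c : ℝ}
    (h : ∀ x, c * ‖x‖ ^ 2 ≤ re ⟪x, T x⟫_𝕜) (i : ι) : c ≤ μ i := by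
  simpa [hb i, inner_smul_right, b.orthonormal.1 i] using h (b i)

theorem card_eigenvalues_le_add_finrank_le (hb : b.IsEigenbasis T μ) {c : ℝ}
    {W : Submodule 𝕜 E} (hW : ∀ x ∈ W, x ≠ 0 → c * ‖x‖ ^ 2 < re ⟪x, T x⟫_𝕜) :
    #{i | μ i ≤ c} + Module.finrank 𝕜 W ≤ Fintype.card ι := by
  have : FiniteDimensional 𝕜 E := b.toBasis.finiteDimensional_of_finite
  set U := Submodule.span 𝕜 (Set.range fun i : {i // μ i ≤ c} => b i)
  have hdisj : Disjoint U W := by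
    refine Submodule.disjoint_def.2 fun x hxU hxW => by_contra fun hx0 => ?_
    have hle := hb.re_inner_apply_self_le fun i hi => inner_eq_zero_of_mem_span hxU hi.not_ge
    exact (hW x hxW hx0).not_ge hle
  have hU : Module.finrank 𝕜 U = #{i | μ i ≤ c} :=
    (finrank_span_eq_card (b.orthonormal.linearIndependent.comp _ Subtype.val_injective)).trans
      (Fintype.card_subtype _)
  rw [← hU, ← Module.finrank_eq_card_basis b.toBasis]
  exact Submodule.finrank_add_finrank_le_of_disjoint hdisj

theorem card_eigenvalues_le_eq_one (hb : b.IsEigenbasis T μ) {c : ℝ} {ψ : E}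
    (hψ : ψ ≠ 0) (hle : re ⟪ψ, T ψ⟫_𝕜 ≤ c * ‖ψ‖ ^ 2)
    (hlt : ∀ x ∈ (𝕜 ∙ ψ)ᗮ, x ≠ 0 → c * ‖x‖ ^ 2 < re ⟪x, T x⟫_𝕜) :
    #{i | μ i ≤ c} = 1 := by
  have : FiniteDimensional 𝕜 E := b.toBasis.finiteDimensional_of_finite
  have hupper := hb.card_eigenvalues_le_add_finrank_le hlt
  have hdim := (𝕜 ∙ ψ).finrank_add_finrank_orthogonal
  rw [finrank_span_singleton hψ, Module.finrank_eq_card_basis b.toBasis] at hdim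
  obtain ⟨i, hi⟩ := hb.exists_eigenvalue_le hψ hle
  have hlower : 0 < #{i | μ i ≤ c} := card_pos.2 ⟨i, by simpa using hi⟩
  omega

theorem lt_re_inner_apply_self_of_mem_orthogonal (hb : b.IsEigenbasis T μ) {c : ℝ}
    (hμ : ∀ i, μ i ≠ 0 → c < μ i) {K : Submodule 𝕜 E} (hker : LinearMap.ker T ≤ K) {x : E}
    (hx : x ∈ Kᗮ) (hx0 : x ≠ 0) : c * ‖x‖ ^ 2 < re ⟪x, T x⟫_𝕜 := by
  refine hb.lt_re_inner_apply_self (fun i hi => ?_) hx0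
  have hμi : μ i = 0 := by_contra fun h => (hμ i h).not_ge hi
  exact Submodule.inner_right_of_mem_orthogonal (hker (by simp [hb i, hμi])) hx

theorem card_eigenvalues_mem_Icc_eq_one {T₀ V : E →ₗ[𝕜] E} {Δ : ℝ} {ψ : E}
    (hb : b.IsEigenbasis ((Δ : 𝕜) • T₀ + V) μ) (hΔ : 0 < Δ)
    (hT₀ : ∀ x, 0 ≤ re ⟪x, T₀ x⟫_𝕜) (hψ : ψ ≠ 0) (hT₀ψ : T₀ ψ = 0)
    (hgap : ∀ x ∈ (𝕜 ∙ ψ)ᗮ, x ≠ 0 → ‖x‖ ^ 2 < re ⟪x, T₀ x⟫_𝕜)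
    (hV : ∀ x, |re ⟪x, V x⟫_𝕜| ≤ Δ / 2 * ‖x‖ ^ 2) :
    #{i | μ i ∈ Set.Icc (-(Δ / 2)) (Δ / 2)} = 1 := by
  have hQ : ∀ x, re ⟪x, ((Δ : 𝕜) • T₀ + V) x⟫_𝕜 = Δ * re ⟪x, T₀ x⟫_𝕜 + re ⟪x, V x⟫_𝕜 := by
    intro x
    simp [inner_add_right, inner_smul_right]
  have hlow : ∀ i, -(Δ / 2) ≤ μ i := hb.le_eigenvalue fun x => by
    rw [hQ]
    nlinarith [hT₀ x, abs_le.1 (hV x)]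
  have hone : #{i | μ i ≤ Δ / 2} = 1 := by
    refine hb.card_eigenvalues_le_eq_one hψ ?_ fun x hx hx0 => ?_
    · simpa [hQ, hT₀ψ] using (abs_le.1 (hV ψ)).2
    · rw [hQ]
      nlinarith [hgap x hx hx0, abs_le.1 (hV x)]
  simpa [hlow] using hone

end IsEigenbasis

end OrthonormalBasis

theorem ContinuousLinearMap.abs_re_inner_apply_self_le {𝕜 E : Type*} [RCLike 𝕜]
    [NormedAddCommGroup E] [InnerProductSpace 𝕜 E] (T : E →L[𝕜] E) (x : E) :
    |RCLike.re ⟪x, T x⟫_𝕜| ≤ ‖T‖ * ‖x‖ ^ 2 :=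
  calc |RCLike.re ⟪x, T x⟫_𝕜| ≤ ‖⟪x, T x⟫_𝕜‖ := RCLike.abs_re_le_norm _
    _ ≤ ‖x‖ * (‖T‖ * ‖x‖) := by grw [norm_inner_le_norm, T.le_opNorm]
    _ = ‖T‖ * ‖x‖ ^ 2 := by ring

theorem Matrix.IsHermitian.isEigenbasis_eigenvectorBasis {𝕜 n : Type*} [RCLike 𝕜] [Fintype n]
    [DecidableEq n] {A : Matrix n n 𝕜} (hA : A.IsHermitian) :
    hA.eigenvectorBasis.IsEigenbasis (Matrix.toEuclideanLin A) hA.eigenvalues := fun i => by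
  rw [Matrix.toLpLin_apply, hA.mulVec_eigenvectorBasis, RCLike.real_smul_eq_coe_smul (K := 𝕜)]
  rfl

section Eigs

variable {N : ℕ} {A : Matrix (Fin N) (Fin N) ℂ}

theorem eigs_eq (hA : A.IsHermitian) : eigs A = hA.eigenvalues ∘ Tuple.sort hA.eigenvalues :=
  dif_pos hA

theorem eigs_sort_symm_apply (hA : A.IsHermitian) (i : Fin N) :
    eigs A ((Tuple.sort hA.eigenvalues).symm i) = hA.eigenvalues i := by
  simp [eigs_eq hA]

theorem card_filter_eigs (hA : A.IsHermitian) (p : ℝ → Prop) [DecidablePred p] :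
    Finset.card {i | p (eigs A i)} = Finset.card {i | p (hA.eigenvalues i)} := by
  rw [eigs_eq hA]
  exact Finset.card_equiv (Tuple.sort hA.eigenvalues) (by simp)

end Eigs

open Matrix WithLp OrthonormalBasis.IsEigenbasis in
theorem unique_eigenvalue_in_low_energy_window_general
    (N : ℕ) (H0 V : Matrix (Fin N) (Fin N) ℂ)
    (hH0 : H0.PosSemidef) (hV : V.IsHermitian)
    (hker : ∃ ψ : Fin N → ℂ, ψ ≠ 0 ∧ ∀ v : Fin N → ℂ,
        H0.mulVec v = 0 ↔ ∃ c : ℂ, v = c • ψ)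
    (hμ : ∀ i : Fin N, eigs H0 i ≠ 0 → 1 < eigs H0 i)
    (Δ : ℝ) (hΔ : 0 < Δ) (hVnorm : opNorm V ≤ Δ / 2) :
    ∃! i : Fin N, eigs ((Δ : ℂ) • H0 + V) i ∈ Set.Icc (-(Δ / 2)) (Δ / 2) := by
  obtain ⟨ψ, hψ, hker⟩ := hker
  have hH : ((Δ : ℂ) • H0 + V).IsHermitian := (hH0.1.smul (Complex.conj_ofReal Δ)).add hV
  have hkerE : LinearMap.ker (toEuclideanLin H0) ≤ ℂ ∙ toLp 2 ψ := fun v hv => by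
    obtain ⟨c, hc⟩ := (hker v.ofLp).1 (congrArg ofLp hv)
    exact Submodule.mem_span_singleton.2 ⟨c, by rw [← v.toLp_ofLp, hc]; rfl⟩
  have hμ₀ : ∀ i, hH0.1.eigenvalues i ≠ 0 → 1 < hH0.1.eigenvalues i := fun i => by
    simpa [eigs_sort_symm_apply] using hμ ((Tuple.sort hH0.1.eigenvalues).symm i)
  have hgap : ∀ x ∈ (ℂ ∙ toLp 2 ψ)ᗮ, x ≠ 0 → ‖x‖ ^ 2 < RCLike.re ⟪x, toEuclideanLin H0 x⟫_ℂ :=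
    fun x hx hx0 => by
      simpa using lt_re_inner_apply_self_of_mem_orthogonal
        hH0.1.isEigenbasis_eigenvectorBasis hμ₀ hkerE hx hx0
  have hψ₀ : toEuclideanLin H0 (toLp 2 ψ) = 0 := by
    simpa [toLpLin_apply] using (hker ψ).2 ⟨1, (one_smul _ _).symm⟩
  have hb : hH.eigenvectorBasis.IsEigenbasis ((Δ : ℂ) • toEuclideanLin H0 + toEuclideanLin V)
      hH.eigenvalues := by
    simpa only [map_add, map_smul] using hH.isEigenbasis_eigenvectorBasis
  rw [Fintype.existsUnique_iff_card_one, card_filter_eigs hH (· ∈ Set.Icc (-(Δ / 2)) (Δ / 2))]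
  exact card_eigenvalues_mem_Icc_eq_one hb hΔ
    (isPositive_toEuclideanLin_iff.2 hH0).re_inner_nonneg_right (by simpa using hψ) hψ₀ hgap
    fun x => ((toEuclideanCLM (𝕜 := ℂ) V).abs_re_inner_apply_self_le x).trans
      (by gcongr; exact hVnorm)

/-- if `H_0 ⪰ 0` has one-dimensional kernel and smallest non-zero
eigenvalue `> 1`, `V` is Hermitian with `‖V‖ ≤ Δ/2` and `Δ > 0`, then
`H = Δ H_0 + V` has exactly one eigenvalue (with multiplicity) in `[−Δ/2, Δ/2]`. -/
theorem unique_eigenvalue_in_low_energy_window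
    (N : ℕ) (hN : 0 < N) (H0 V : Matrix (Fin N) (Fin N) ℂ)
    (hH0 : H0.PosSemidef) (hV : V.IsHermitian)
    (hker : ∃ ψ : Fin N → ℂ, ψ ≠ 0 ∧ ∀ v : Fin N → ℂ,
        H0.mulVec v = 0 ↔ ∃ c : ℂ, v = c • ψ)
    (hμ : ∀ i : Fin N, eigs H0 i ≠ 0 → 1 < eigs H0 i)
    (Δ : ℝ) (hΔ : 0 < Δ) (hVnorm : opNorm V ≤ Δ / 2) :
    ∃! i : Fin N, eigs ((Δ : ℂ) • H0 + V) i ∈ Set.Icc (-(Δ / 2)) (Δ / 2) :=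
  unique_eigenvalue_in_low_energy_window_general N H0 V hH0 hV hker hμ Δ hΔ hVnorm
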